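/- Let P be a crisp extended LP and let L, U, Z ∈ 𝕀 with L ≤t Z. Setting α := ζ(Z), σ := ζ(L) and δ := Lit(Π) ∖ ζ(U), for every literal ℓ ∈ Lit(Π): ⟦ℓ⟧_{A_P(Z,U)₁} = 1 if and only if ℓ ∈ PF^{σ,δ}(α). -/
import Mathlib


open Classical

/-- Literals over a type `A` of atoms: atoms `p` and strongly negated atoms `¬p`. -/
inductive Lit (A : Type*) where
  | pos : A → Lit A
  | neg : A → Lit A

/-- Crisp paraconsistent interpretations: each atom gets a pair of Boolean truth values
(truth, falsity); `true` plays the role of 1 and `false` of 0.  The order is the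
pointwise truth order `≤t`. -/
abbrev CInterp (A : Type*) := A → Bool × Bool

/-- Evaluation of a literal under a crisp paraconsistent interpretation. -/
def clit {A : Type*} (I : CInterp A) : Lit A → Bool
  | .pos p => (I p).1
  | .neg p => (I p).2

/-- A crisp rule body: a finite set of positive body literals and a finite
set of weakly negated body literals. -/
structure CBody (A : Type*) where
  pos : Finset (Lit A)
  wneg : Finset (Lit A)

/-- A crisp extended logic program: a set of rules `ℓ ← B`. -/
abbrev CProg (A : Type*) := Set (Lit A × CBody A)

/-- Pair evaluation of a crisp body: `1` iff all positive body literals are true in `I`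
and all weakly negated body literals are false in `J`. -/
noncomputable def cbody {A : Type*} (I J : CInterp A) (B : CBody A) : Bool :=
  if (∀ ℓ ∈ B.pos, clit I ℓ = true) ∧ (∀ ℓ ∈ B.wneg, clit J ℓ = false) then true else false

/-- The (lower half of the) crisp approximator `A_P(·,·)₁`: the head of an atom `p`
gets the max (over rules) of the pair-evaluations of the corresponding bodies
(max over the empty set being 0, i.e. `false`). -/
noncomputable def cA1 {A : Type*} (P : CProg A) (L U : CInterp A) : CInterp A :=
  fun p => (if ∃ B, (Lit.pos p, B) ∈ P ∧ cbody L U B = true then true else false,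
            if ∃ B, (Lit.neg p, B) ∈ P ∧ cbody L U B = true then true else false)

/-- The crisp approximator `A_P` on pairs. -/
noncomputable def cA {A : Type*} (P : CProg A) (LU : CInterp A × CInterp A) :
    CInterp A × CInterp A :=
  (cA1 P LU.1 LU.2, cA1 P LU.2 LU.1)

/-- The order isomorphism `ζ` from crisp paraconsistent interpretations to sets of literals. -/
def zeta {A : Type*} (I : CInterp A) : Set (Lit A) :=
  (Lit.pos '' {p | (I p).1 = true}) ∪ (Lit.neg '' {p | (I p).2 = true})

/-- Least pre-fixpoint (Knaster–Tarski least fixpoint for monotone maps). -/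
def lfpOf {α : Type*} [CompleteLattice α] (f : α → α) : α := sInf {x | f x ≤ x}

/-- Greatest post-fixpoint (Knaster–Tarski greatest fixpoint for monotone maps). -/
def gfpOf {α : Type*} [CompleteLattice α] (f : α → α) : α := sSup {x | x ≤ f x}

/-- The stable approximator `A_P^st`. -/
noncomputable def cAst {A : Type*} (P : CProg A) (LU : CInterp A × CInterp A) :
    CInterp A × CInterp A :=
  (lfpOf (fun X => cA1 P X LU.2), lfpOf (fun X => cA1 P X LU.1))

/-- The stable-approximator iteration `(L^i, U^i)` starting from `(⊥,⊤)`. -/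
noncomputable def iterLU {A : Type*} (P : CProg A) : ℕ → CInterp A × CInterp A
  | 0 => (⊥, ⊤)
  | i + 1 => cAst P (iterLU P i)

/-- Sakama's proven-facts operator `PF^{σ,δ}`. -/
def PF {A : Type*} (P : CProg A) (σ δ : Set (Lit A)) (α : Set (Lit A)) : Set (Lit A) :=
  {ℓ | ∃ B, (ℓ, B) ∈ P ∧ ↑B.pos ⊆ σ ∪ α ∧ ↑B.wneg ⊆ δ}

/-- Sakama's default-facts operator `DF^{σ,δ}`. -/
def DF {A : Type*} (P : CProg A) (σ δ : Set (Lit A)) (β : Set (Lit A)) : Set (Lit A) :=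
  {ℓ | ∀ B, (ℓ, B) ∈ P → (↑B.pos ∩ (β ∪ δ)).Nonempty ∨ (↑B.wneg ∩ σ).Nonempty}



lemma mem_zeta_iff {A : Type*} (I : CInterp A) (ℓ : Lit A) :
    ℓ ∈ zeta I ↔ clit I ℓ = true := by
  cases ℓ with
  | pos p =>
    constructor
    · rintro (⟨q, hq, h⟩ | ⟨q, hq, h⟩) <;> simp_all [clit]
    · intro h; exact Or.inl ⟨p, h, rfl⟩
  | neg p =>
    constructor
    · rintro (⟨q, hq, h⟩ | ⟨q, hq, h⟩) <;> simp_all [clit]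
    · intro h; exact Or.inr ⟨p, h, rfl⟩

lemma zeta_mono {A : Type*} {L Z : CInterp A} (hLZ : L ≤ Z) : zeta L ⊆ zeta Z := by
  intro ℓ hℓ
  rw [mem_zeta_iff] at hℓ ⊢
  cases ℓ with
  | pos p => have := (hLZ p).1; revert hℓ this; simp only [clit]
             cases (L p).1 <;> cases (Z p).1 <;> simp
  | neg p => have := (hLZ p).2; revert hℓ this; simp only [clit]
             cases (L p).2 <;> cases (Z p).2 <;> simp

lemma cbody_iff {A : Type*} (L U Z : CInterp A) (hLZ : L ≤ Z) (B : CBody A) :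
    cbody Z U B = true ↔
      ↑B.pos ⊆ zeta L ∪ zeta Z ∧ ↑B.wneg ⊆ Set.univ \ zeta U := by
  have hsub : zeta L ∪ zeta Z = zeta Z :=
    Set.union_eq_self_of_subset_left (zeta_mono hLZ)
  rw [hsub, cbody]
  split
  · rename_i hc
    obtain ⟨h1, h2⟩ := hc
    constructor
    · intro _
      refine ⟨fun ℓ hℓ => (mem_zeta_iff Z ℓ).2 (h1 ℓ hℓ), fun ℓ hℓ => ⟨trivial, ?_⟩⟩
      intro hmem
      rw [mem_zeta_iff, h2 ℓ hℓ] at hmem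
      exact Bool.false_ne_true hmem
    · intro _; rfl
  · rename_i hc
    constructor
    · intro h; exact absurd h (by simp)
    · rintro ⟨h1, h2⟩
      refine absurd ⟨fun ℓ hℓ => (mem_zeta_iff Z ℓ).1 (h1 hℓ), fun ℓ hℓ => ?_⟩ hc
      have := (h2 hℓ).2
      rw [mem_zeta_iff] at this
      exact Bool.eq_false_iff.2 fun he => this he

/-- Let `L, U, Z ∈ 𝕀` with `L ≤t Z`, and put `α := ζ(Z)`, `σ := ζ(L)`,
`δ := Lit(Π) ∖ ζ(U)`.  Then for every literal `ℓ`: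
`⟦ℓ⟧_{A_P(Z,U)₁} = 1` iff `ℓ ∈ PF^{σ,δ}(α)`. -/
theorem clit_cA1_iff_mem_PF {A : Type*}
    (P : CProg A) (hfin : P.Finite) (L U Z : CInterp A) (hLZ : L ≤ Z) (ℓ : Lit A) :
    clit (cA1 P Z U) ℓ = true ↔ ℓ ∈ PF P (zeta L) (Set.univ \ zeta U) (zeta Z) := by
  have hgen : ∀ (c : Prop) (inst : Decidable c), (if c then true else false) = true ↔ c := by
    intro c inst; split <;> simp_all
  cases ℓ with
  | pos p =>
    show (if ∃ B, (Lit.pos p, B) ∈ P ∧ cbody Z U B = true then true else false) = true ↔ _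
    rw [hgen]
    simp only [PF, Set.mem_setOf_eq, cbody_iff L U Z hLZ]
  | neg p =>
    show (if ∃ B, (Lit.neg p, B) ∈ P ∧ cbody Z U B = true then true else false) = true ↔ _
    rw [hgen]
    simp only [PF, Set.mem_setOf_eq, cbody_iff L U Z hLZ]
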